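/- arXiv:2410.01624 — 2 statements merged into one kernel-verified Lean document; each statement's English description precedes it below -/
import Mathlib

section
/- Let f(z) = (e^z + 1)/(e^z - 1)^2 and g(z) = (e^z + 1)^2/(8(e^z - 1)). Then f and g share the values 0 and -1/8 in the following sense: for z with e^z ≠ 1, f(z) = 0 iff g(z) = 0 (namely iff e^z = -1), and f(z) = -1/8 iff g(z) = -1/8; moreover every zero of f is simple while every zero of g is double. -/
open Complex

-- auxiliary: factorization of exp z + 1 near a point where exp z₀ = -1
lemma exp_add_one_factor {z₀ : ℂ} (h : Complex.exp z₀ = -1) :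
    ∃ E : ℂ → ℂ, AnalyticAt ℂ E z₀ ∧ E z₀ = -1 ∧
      ∀ z, z ≠ z₀ → Complex.exp z + 1 = (z - z₀) * E z := by
  have hA : AnalyticAt ℂ (fun z => Complex.exp z + 1) z₀ :=
    (analyticAt_cexp).add analyticAt_const
  obtain ⟨p, hp⟩ := hA
  refine ⟨dslope (fun z => Complex.exp z + 1) z₀, hp.has_fpower_series_dslope_fslope.analyticAt,
    ?_, ?_⟩
  · rw [dslope_same]
    have : HasDerivAt (fun z => Complex.exp z + 1) (Complex.exp z₀) z₀ :=
      (Complex.hasDerivAt_exp z₀).add_const 1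
    rw [this.deriv, h]
  · intro z hz
    have hds := dslope_of_ne (f := fun z => Complex.exp z + 1) (a := z₀) (b := z) hz
    rw [slope_def_field] at hds
    have hz' : z - z₀ ≠ 0 := sub_ne_zero.mpr hz
    rw [hds]
    field_simp [h]
    rw [h]; ring

theorem stmt_10 :
    let f : ℂ → ℂ := fun z => (Complex.exp z + 1) / (Complex.exp z - 1) ^ 2
    let g : ℂ → ℂ := fun z => (Complex.exp z + 1) ^ 2 / (8 * (Complex.exp z - 1))
    ∀ z : ℂ, Complex.exp z ≠ 1 →
      ((f z = 0 ↔ g z = 0) ∧ (f z = 0 ↔ Complex.exp z = -1)) ∧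
      (f z = -1/8 ↔ g z = -1/8) ∧
      -- every zero of f is simple
      (f z = 0 → ∀ hf : MeromorphicAt f z, meromorphicOrderAt f z = (1 : ℤ)) ∧
      -- every zero of g is double
      (g z = 0 → ∀ hg : MeromorphicAt g z, meromorphicOrderAt g z = (2 : ℤ)) := by
  intro f g z hz
  have hd : Complex.exp z - 1 ≠ 0 := sub_ne_zero.mpr hz
  have hd2 : (Complex.exp z - 1) ^ 2 ≠ 0 := pow_ne_zero 2 hd
  have hd8 : (8 : ℂ) * (Complex.exp z - 1) ≠ 0 := mul_ne_zero (by norm_num) hd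
  have hf0 : f z = 0 ↔ Complex.exp z = -1 := by
    simp only [f, div_eq_zero_iff, hd2, or_false]
    constructor
    · intro h; linear_combination h
    · intro h; rw [h]; ring
  have hg0 : g z = 0 ↔ Complex.exp z = -1 := by
    simp only [g, div_eq_zero_iff, hd8, or_false, pow_eq_zero_iff (two_ne_zero)]
    constructor
    · intro h; linear_combination h
    · intro h; rw [h]; ring
  refine ⟨⟨hf0.trans hg0.symm, hf0⟩, ?_, ?_, ?_⟩
  · -- f z = -1/8 ↔ g z = -1/8, both iff exp z = -3
    have h1 : f z = -1/8 ↔ Complex.exp z = -3 := by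
      constructor
      · intro h
        rw [div_eq_iff hd2] at h
        have h2 : (Complex.exp z + 3) ^ 2 = 0 := by linear_combination (8 : ℂ) * h
        have := pow_eq_zero_iff (n := 2) two_ne_zero |>.mp h2
        linear_combination this
      · intro h
        simp only [f, h]; norm_num
    have h2 : g z = -1/8 ↔ Complex.exp z = -3 := by
      constructor
      · intro h
        rw [div_eq_iff hd8] at h
        have h2 : Complex.exp z * (Complex.exp z + 3) = 0 := by linear_combination h
        rcases mul_eq_zero.mp h2 with h3 | h3
        · exact absurd h3 (Complex.exp_ne_zero z)
        · linear_combination h3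
      · intro h
        simp only [g, h]; norm_num
    rw [h1, h2]
  · -- zeros of f are simple
    intro hfz hf
    have he : Complex.exp z = -1 := hf0.mp hfz
    obtain ⟨E, hE, hE0, hEfac⟩ := exp_add_one_factor he
    rw [meromorphicOrderAt_eq_int_iff hf]
    refine ⟨fun w => E w / (Complex.exp w - 1) ^ 2, ?_, ?_, ?_⟩
    · exact hE.div ((analyticAt_cexp.sub analyticAt_const).pow 2)
        (by rw [he]; norm_num)
    · show E z / (Complex.exp z - 1) ^ 2 ≠ 0
      rw [he, hE0]; norm_num
    · filter_upwards [self_mem_nhdsWithin] with w hw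
      have hw' : w ≠ z := hw
      simp only [f, smul_eq_mul, zpow_one]
      rw [hEfac w hw']
      ring
  · -- zeros of g are double
    intro hgz hg
    have he : Complex.exp z = -1 := hg0.mp hgz
    obtain ⟨E, hE, hE0, hEfac⟩ := exp_add_one_factor he
    rw [meromorphicOrderAt_eq_int_iff hg]
    refine ⟨fun w => E w ^ 2 / (8 * (Complex.exp w - 1)), ?_, ?_, ?_⟩
    · exact (hE.pow 2).div ((analyticAt_const.mul
        (analyticAt_cexp.sub analyticAt_const))) (by rw [he]; norm_num)
    · show E z ^ 2 / (8 * (Complex.exp z - 1)) ≠ 0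
      rw [he, hE0]; norm_num
    · filter_upwards [self_mem_nhdsWithin] with w hw
      have hw' : w ≠ z := hw
      simp only [g, smul_eq_mul]
      rw [hEfac w hw', show ((2:ℤ)) = ((2:ℕ) : ℤ) from rfl, zpow_natCast]
      ring
end

section
/- Let a = -1/2 + (i/2)√3 and H(u,y) = y^3 - 3((ā - 1)u^2 - 2u)y^2 - 3(2u^2 - (a - 1)u)y - u^3. Near (u,y) = (0,0), the equation H(u,y) = 0 has a local analytic solution branch y = y(u) with y(u) = C·u^2 + O(u^3) for some nonzero constant C; i.e., H(u, y) = 0, H_y(0,0) = 0, H_{yy}(0,0) = 0 but the branch through (0,0) tangent to y = 0 has contact of order exactly 2. -/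
open Complex Filter

noncomputable section

/-- linear equivalence (h,k) ↦ (h, α h + β k) of ℂ² for β ≠ 0 -/
noncomputable def myCLE (α β : ℂ) (hβ : β ≠ 0) : (ℂ × ℂ) ≃L[ℂ] (ℂ × ℂ) :=
{ toLinearEquiv :=
  { toFun := fun p => (p.1, α * p.1 + β * p.2)
    map_add' := by intro p q; simp [Prod.ext_iff]; ring
    map_smul' := by intro c p; simp [Prod.ext_iff, smul_eq_mul]; ring
    invFun := fun p => (p.1, (p.2 - α * p.1) / β)
    left_inv := by intro p; simp [Prod.ext_iff]; field_simp
    right_inv := by intro p; simp [Prod.ext_iff]; field_simp; ring }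
  continuous_toFun := by fun_prop
  continuous_invFun := by fun_prop }

lemma myCLE_apply (α β : ℂ) (hβ : β ≠ 0) (p : ℂ × ℂ) :
    (myCLE α β hβ : (ℂ × ℂ) →L[ℂ] (ℂ × ℂ)) p = (p.1, α * p.1 + β * p.2) := rfl

/-- the rescaled polynomial G(u,w) = H(u, u²w)/u³ -/
def Gf (a b : ℂ) : ℂ × ℂ → ℂ := fun p =>
  p.1*p.1*p.1*(p.2*(p.2*p.2)) - 3*(b-1)*(p.1*(p.1*p.1)*(p.2*p.2)) + 6*(p.1*p.1*(p.2*p.2))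
    - 6*(p.1*p.2) + 3*(a-1)*p.2 - 1

lemma exists_w (a b : ℂ) (ha : a - 1 ≠ 0) :
    ∃ w : ℂ → ℂ, AnalyticAt ℂ w 0 ∧ w 0 = (3*(a-1))⁻¹ ∧
      ∀ᶠ u in nhds (0:ℂ), Gf a b (u, w u) = 0 := by
  have hβ : (3:ℂ)*(a-1) ≠ 0 := by
    simp [ha]
  set w₀ : ℂ := (3*(a-1))⁻¹ with hw₀
  set p₀ : ℂ × ℂ := (0, w₀) with hp₀
  set α : ℂ := -6 * w₀ with hα
  set e := myCLE α (3*(a-1)) hβ with he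
  set Φ : ℂ × ℂ → ℂ × ℂ := fun p => (p.1, Gf a b p) with hΦdef
  -- strict derivative of Φ at p₀ is e
  have hx : HasStrictFDerivAt (fun p : ℂ × ℂ => p.1) (ContinuousLinearMap.fst ℂ ℂ ℂ) p₀ :=
    (ContinuousLinearMap.fst ℂ ℂ ℂ).hasStrictFDerivAt
  have hy : HasStrictFDerivAt (fun p : ℂ × ℂ => p.2) (ContinuousLinearMap.snd ℂ ℂ ℂ) p₀ :=
    (ContinuousLinearMap.snd ℂ ℂ ℂ).hasStrictFDerivAt
  have hG := (((((((hx.mul hx).mul hx).mul ((hy.mul (hy.mul hy)))).sub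
      (((hx.mul (hx.mul hx)).mul (hy.mul hy)).const_mul (3*(b-1)))).add
      (((hx.mul hx).mul (hy.mul hy)).const_mul 6)).sub
      ((hx.mul hy).const_mul 6)).add (hy.const_mul (3*(a-1)))).sub_const (1:ℂ)
  have hΦ : HasStrictFDerivAt Φ (e : (ℂ × ℂ) →L[ℂ] (ℂ × ℂ)) p₀ := by
    have h2 := hx.prodMk hG
    refine h2.congr_fderiv ?_
    refine ContinuousLinearMap.ext fun p => ?_
    simp [he, myCLE_apply, Prod.ext_iff, hp₀, hα, hw₀]
    ring
  -- the partial homeomorphism given by the inverse function theorem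
  set f := hΦ.toOpenPartialHomeomorph Φ with hf
  have hcoe : (f : ℂ × ℂ → ℂ × ℂ) = Φ := hΦ.toOpenPartialHomeomorph_coe
  have hsrc : p₀ ∈ f.source := hΦ.mem_toOpenPartialHomeomorph_source
  have hΦp₀ : Φ p₀ = (0, 0) := by
    simp only [hΦdef, hp₀, Gf]
    rw [hw₀]
    norm_num
    field_simp
    ring
  have htgt : ((0:ℂ), (0:ℂ)) ∈ f.target := by
    rw [← hΦp₀, ← hcoe]
    exact f.map_source hsrc
  have hsymm0 : f.symm (0, 0) = p₀ := by
    rw [← hΦp₀, ← hcoe]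
    exact f.left_inv hsrc
  -- Φ is analytic
  have hfa : AnalyticAt ℂ (fun p : ℂ × ℂ => p.1) p₀ := analyticAt_fst
  have hsn : AnalyticAt ℂ (fun p : ℂ × ℂ => p.2) p₀ := analyticAt_snd
  have hGa : AnalyticAt ℂ (Gf a b) p₀ := by
    exact ((((((hfa.mul hfa).mul hfa).mul (hsn.mul (hsn.mul hsn))).sub
      (analyticAt_const.mul ((hfa.mul (hfa.mul hfa)).mul (hsn.mul hsn)))).add
      (analyticAt_const.mul ((hfa.mul hfa).mul (hsn.mul hsn)))).sub
      (analyticAt_const.mul (hfa.mul hsn))).add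
      (analyticAt_const.mul hsn) |>.sub analyticAt_const
  have hΦa : AnalyticAt ℂ Φ p₀ := hfa.prod hGa
  -- the inverse is analytic at (0,0)
  have hfd : fderiv ℂ Φ p₀ = (e : (ℂ × ℂ) →L[ℂ] (ℂ × ℂ)) := hΦ.hasFDerivAt.fderiv
  have hsymm : AnalyticAt ℂ f.symm ((0:ℂ), (0:ℂ)) := by
    apply f.analyticAt_symm htgt
    · rw [hsymm0, hcoe]; exact hΦa
    · rw [hsymm0, hcoe]; exact hfd
  -- define w
  refine ⟨fun u => (f.symm (u, 0)).2, ?_, ?_, ?_⟩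
  · have h1 : AnalyticAt ℂ (fun u : ℂ => ((u, 0) : ℂ × ℂ)) 0 :=
      analyticAt_id.prod analyticAt_const
    have h2 : AnalyticAt ℂ (fun u : ℂ => f.symm (u, 0)) 0 := hsymm.comp_of_eq h1 rfl
    exact analyticAt_snd.comp h2
  · show (f.symm ((0:ℂ), (0:ℂ))).2 = (3*(a-1))⁻¹
    rw [hsymm0]
  · have hcont : ContinuousAt (fun u : ℂ => ((u, 0) : ℂ × ℂ)) 0 := by fun_prop
    have hev : ∀ᶠ u in nhds (0:ℂ), ((u, 0) : ℂ × ℂ) ∈ f.target :=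
      hcont (f.open_target.mem_nhds htgt)
    filter_upwards [hev] with u hu
    have h3 : Φ (f.symm (u, 0)) = (u, 0) := by
      rw [← hcoe]; exact f.right_inv hu
    have h4 : (f.symm (u, 0)).1 = u := congrArg Prod.fst h3
    have h5 : Gf a b (f.symm (u, 0)) = 0 := by
      have := congrArg Prod.snd h3
      simpa [hΦdef] using this
    have h6 : Gf a b (f.symm (u, 0)) = Gf a b (u, (f.symm (u, 0)).2) := by
      rw [show ((u, (f.symm (u,0)).2) : ℂ × ℂ) = ((f.symm (u,0)).1, (f.symm (u,0)).2) by rw [h4]]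
    rw [← h6, h5]

end


theorem stmt_12 :
    let a : ℂ := -1/2 + (Complex.I / 2) * Real.sqrt 3
    let H : ℂ → ℂ → ℂ := fun u y =>
      y ^ 3 - 3 * (((starRingEnd ℂ) a - 1) * u ^ 2 - 2 * u) * y ^ 2
        - 3 * (2 * u ^ 2 - (a - 1) * u) * y - u ^ 3
    -- H vanishes at the origin together with its first and second partial
    -- derivatives with respect to y
    H 0 0 = 0 ∧ deriv (fun y => H 0 y) 0 = 0 ∧ iteratedDeriv 2 (fun y => H 0 y) 0 = 0 ∧
    -- there is a local analytic branch y(u) = C·u² + O(u³) with C ≠ 0 solving H(u, y(u)) = 0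
    ∃ (y : ℂ → ℂ) (C : ℂ), C ≠ 0 ∧ AnalyticAt ℂ y 0 ∧
      y 0 = 0 ∧ deriv y 0 = 0 ∧ iteratedDeriv 2 y 0 = 2 * C ∧
      ∀ᶠ u in nhds (0 : ℂ), H u (y u) = 0 := by
  intro a H
  have hcube : (fun y => H 0 y) = fun y : ℂ => y ^ 3 := by
    funext y; simp [H]
  have hderiv3 : deriv (fun y : ℂ => y ^ 3) = fun y : ℂ => 3 * y ^ 2 := by
    funext y; simp [deriv_pow]
  refine ⟨by simp [H], ?_, ?_, ?_⟩
  · rw [hcube, hderiv3]; norm_num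
  · rw [hcube, iteratedDeriv_succ, iteratedDeriv_one, hderiv3]
    have := ((hasDerivAt_pow 2 (0:ℂ)).const_mul 3).deriv
    rw [this]; norm_num
  · have ha : a - 1 ≠ 0 := by
      simp only [a, sub_ne_zero]
      intro h
      have hre := congrArg Complex.re h
      simp [Complex.add_re, Complex.mul_re, Complex.div_re, Complex.I_re, Complex.I_im] at hre
      norm_num at hre
    have hβ : (3:ℂ) * (a - 1) ≠ 0 := by simp [ha]
    obtain ⟨w, hw, hw0, hev⟩ := exists_w a ((starRingEnd ℂ) a) ha
    refine ⟨fun u => u ^ 2 * w u, (3 * (a - 1))⁻¹, inv_ne_zero hβ, ?_, by simp, ?_, ?_, ?_⟩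
    · exact (analyticAt_id.pow 2).mul hw
    · have hD := (hasDerivAt_pow 2 (0:ℂ)).mul hw.differentiableAt.hasDerivAt
      rw [show (fun u : ℂ => u ^ 2 * w u) = (fun x => x ^ 2) * w from rfl, hD.deriv]; norm_num
    · -- second derivative
      have hwa : ∀ᶠ u in nhds (0:ℂ), AnalyticAt ℂ w u := hw.eventually_analyticAt
      have h1 : (deriv fun u : ℂ => u ^ 2 * w u)
          =ᶠ[nhds (0:ℂ)] fun u => 2 * u ^ 1 * w u + u ^ 2 * deriv w u := by
        filter_upwards [hwa] with u hu
        have hD := (hasDerivAt_pow 2 u).mul hu.differentiableAt.hasDerivAt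
        rw [show (fun u : ℂ => u ^ 2 * w u) = (fun x => x ^ 2) * w from rfl, hD.deriv]; norm_num
      rw [iteratedDeriv_succ, iteratedDeriv_one, h1.deriv_eq]
      have hw' : AnalyticAt ℂ (deriv w) 0 := by
        have h2 := hw.fderiv
        have h3 : deriv w = fun u => (fderiv ℂ w u) 1 := rfl
        rw [h3]
        exact ((ContinuousLinearMap.apply ℂ ℂ (1:ℂ)).analyticAt _).comp_of_eq h2 rfl
      have hD1 : HasDerivAt (fun u : ℂ => 2 * u ^ 1 * w u) (2 * w 0) 0 := by
        have h4 := ((hasDerivAt_pow 1 (0:ℂ)).const_mul 2).mul hw.differentiableAt.hasDerivAt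
        have h5 : (fun u : ℂ => 2 * u ^ 1 * w u) = fun u : ℂ => 2 * u ^ 1 * w u := rfl
        exact h4.congr_deriv (by norm_num)
      have hD2 : HasDerivAt (fun u : ℂ => u ^ 2 * deriv w u) 0 0 := by
        have h6 := (hasDerivAt_pow 2 (0:ℂ)).mul hw'.differentiableAt.hasDerivAt
        exact h6.congr_deriv (by norm_num)
      rw [show (fun u : ℂ => 2 * u ^ 1 * w u + u ^ 2 * deriv w u) = (fun u : ℂ => 2 * u ^ 1 * w u) + (fun u : ℂ => u ^ 2 * deriv w u) from rfl, (hD1.add hD2).deriv, hw0]; ring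
    · filter_upwards [hev] with u hu
      have key : H u (u ^ 2 * w u) = u ^ 3 * Gf a ((starRingEnd ℂ) a) (u, w u) := by
        simp only [H, Gf]; ring
      show H u (u ^ 2 * w u) = 0
      rw [key, hu, mul_zero]
end
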